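/- Let s ∈ {1,…,m} and let μ, ν be partitions with at most m parts with l(μ) ≤ s and l(ν) ≤ s. Then μ and ν are conjugate under the dot action of W_p(C_s) if and only if |μ| − |ν| is even and, for every r ∈ {0, 1, …, (p−1)/2}, the number of indices i ∈ {1,…,s} with (μ+ρ)_i ≡ r or −r (mod p) equals the number of indices i ∈ {1,…,s} with (ν+ρ)_i ≡ r or −r (mod p). (Arrow-diagram formulation: μ and ν are W_p(C_s)-conjugate under the dot action iff |μ| − |ν| is even and their arrow diagrams have the same number of arrows at each node.) -/

import Mathlib

/-- ρ = (m, m-1, …, 1); with 0-indexed coordinates, ρ k = m - k. -/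
def rho {m : ℕ} : Fin m → ℤ := fun k => (m : ℤ) - (k : ℕ)

/-- A partition with at most m parts: weakly decreasing and nonnegative entries. -/
def IsPartitionVec {m : ℕ} (lam : Fin m → ℤ) : Prop :=
  (∀ i j : Fin m, i ≤ j → lam j ≤ lam i) ∧ ∀ i, 0 ≤ lam i

/-- The length of a partition: the number of nonzero entries. -/
def plen {m : ℕ} (lam : Fin m → ℤ) : ℕ :=
  (Finset.univ.filter fun i => lam i ≠ 0).card

/-- A vector is regular if all entries are nonzero and no two entries have
the same absolute value. -/
def Regular {m : ℕ} (v : Fin m → ℤ) : Prop :=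
  (∀ k, v k ≠ 0) ∧ ∀ k k', k ≠ k' → |v k| ≠ |v k'|

/-- Affine reflection s_{ε_i−ε_j,l}: x ↦ x − a(e_i − e_j), a = x_i − x_j − lp. -/
def sMinus {m : ℕ} (p : ℤ) (i j : Fin m) (l : ℤ) (x : Fin m → ℤ) : Fin m → ℤ :=
  fun k => x k - (x i - x j - l * p) * ((if k = i then 1 else 0) - (if k = j then 1 else 0))

/-- Affine reflection s_{ε_i+ε_j,l}: x ↦ x − a(e_i + e_j), a = x_i + x_j − lp. -/
def sPlus {m : ℕ} (p : ℤ) (i j : Fin m) (l : ℤ) (x : Fin m → ℤ) : Fin m → ℤ :=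
  fun k => x k - (x i + x j - l * p) * ((if k = i then 1 else 0) + (if k = j then 1 else 0))

/-- Affine reflection s_{2ε_i,l}: x ↦ x − 2a·e_i, a = x_i − lp. -/
def sDouble {m : ℕ} (p : ℤ) (i : Fin m) (l : ℤ) (x : Fin m → ℤ) : Fin m → ℤ :=
  fun k => x k - 2 * (x i - l * p) * (if k = i then 1 else 0)

/-- λ is a p-core: for every i and every l ≥ 1 with (λ+ρ)_i − lp > 0, the number
(λ+ρ)_i − lp occurs as an entry of λ+ρ. -/
def IsPCore {m : ℕ} (p : ℕ) (lam : Fin m → ℤ) : Prop :=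
  ∀ (i : Fin m) (l : ℤ), 1 ≤ l → 0 < lam i + rho i - l * p →
    ∃ j : Fin m, lam j + rho j = lam i + rho i - l * p

/-- The affine reflection s_{ε_i−ε_j,l} as a bijection of ℤ^m. -/
def sMinusPerm {m : ℕ} (p : ℤ) (i j : Fin m) (h : i ≠ j) (l : ℤ) :
    Equiv.Perm (Fin m → ℤ) :=
  Function.Involutive.toPerm (sMinus p i j l) (by
    intro x; funext k
    simp only [sMinus]
    by_cases hki : k = i <;> by_cases hkj : k = j <;>
      simp [hki, hkj, h, Ne.symm h] <;> ring)

/-- The affine reflection s_{ε_i+ε_j,l} as a bijection of ℤ^m. -/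
def sPlusPerm {m : ℕ} (p : ℤ) (i j : Fin m) (h : i ≠ j) (l : ℤ) :
    Equiv.Perm (Fin m → ℤ) :=
  Function.Involutive.toPerm (sPlus p i j l) (by
    intro x; funext k
    simp only [sPlus]
    by_cases hki : k = i <;> by_cases hkj : k = j <;>
      simp [hki, hkj, h, Ne.symm h] <;> ring)

/-- The affine reflection s_{2ε_i,l} as a bijection of ℤ^m. -/
def sDoublePerm {m : ℕ} (p : ℤ) (i : Fin m) (l : ℤ) :
    Equiv.Perm (Fin m → ℤ) :=
  Function.Involutive.toPerm (sDouble p i l) (by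
    intro x; funext k
    simp only [sDouble]
    by_cases hki : k = i <;> simp [hki] <;> ring)

/-- Generators of W_p(D_s): the reflections s_{ε_i−ε_j,l} and s_{ε_i+ε_j,l}
for 1 ≤ i < j ≤ s (0-indexed: i < j, (j:ℕ) < s) and l ∈ ℤ. -/
def DGenerators (m : ℕ) (p : ℤ) (s : ℕ) : Set (Equiv.Perm (Fin m → ℤ)) :=
  {σ | ∃ (i j : Fin m) (l : ℤ) (h : i < j), (j : ℕ) < s ∧
        (σ = sMinusPerm p i j h.ne l ∨ σ = sPlusPerm p i j h.ne l)}

/-- The affine Weyl group W_p(D_s). -/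
def WpD (m : ℕ) (p : ℤ) (s : ℕ) : Subgroup (Equiv.Perm (Fin m → ℤ)) :=
  Subgroup.closure (DGenerators m p s)

/-- Generators of W_p(C_s): those of W_p(D_s) together with the reflections
s_{2ε_i,l} for 1 ≤ i ≤ s (0-indexed: (i:ℕ) < s) and l ∈ ℤ. -/
def CGenerators (m : ℕ) (p : ℤ) (s : ℕ) : Set (Equiv.Perm (Fin m → ℤ)) :=
  DGenerators m p s ∪ {σ | ∃ (i : Fin m) (l : ℤ), (i : ℕ) < s ∧ σ = sDoublePerm p i l}

/-- The affine Weyl group W_p(C_s). -/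
def WpC (m : ℕ) (p : ℤ) (s : ℕ) : Subgroup (Equiv.Perm (Fin m → ℤ)) :=
  Subgroup.closure (CGenerators m p s)

/-- μ and ν are conjugate under the dot action of the group G:
some element of G maps μ+ρ to ν+ρ. -/
def DotConj {m : ℕ} (G : Subgroup (Equiv.Perm (Fin m → ℤ))) (mu nu : Fin m → ℤ) : Prop :=
  ∃ g ∈ G, g (fun k => mu k + rho k) = fun k => nu k + rho k

/-!
Every generating reflection acts on the first `s` coordinates of `x = μ + ρ` by a signed
permutation followed by a translation in `p ℤ^s`, and changes `∑ x` by an even number. So the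
parity of `∑ x` and, for each class `c` of `ℤ` modulo `a ∼ ±a (mod p)`, the number of `i < s`
with `x_i ∈ c` are invariants.

Conversely, let `x, y` agree beyond `s` (as `μ + ρ` and `ν + ρ` do when `l(μ), l(ν) ≤ s`) and
share these invariants. A permutation of the first `s` coordinates (a product of the reflections
`s_{ε_i-ε_j,0}`) followed by sign changes (the `s_{2ε_i,0}`) brings `x` to some `z ≡ y (mod p)`.
Then `y - z = p t` with `∑ t` even, because `p` is odd. The translations in `W_p(C_s)` form a
lattice containing `p (e_i - e_j)` and `2p e_i` (each a product of two parallel reflections), and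
these span all `p t` with `t` supported on the first `s` coordinates and `∑ t` even.
-/

open Equiv Finset

section Reflections

variable {m : ℕ} {p l : ℤ} {i j k : Fin m} {x : Fin m → ℤ}

@[simp] lemma sMinusPerm_apply (h : i ≠ j) : sMinusPerm p i j h l x = sMinus p i j l x := rfl

@[simp] lemma sPlusPerm_apply (h : i ≠ j) : sPlusPerm p i j h l x = sPlus p i j l x := rfl

@[simp] lemma sDoublePerm_apply : sDoublePerm p i l x = sDouble p i l x := rfl

@[simp] lemma sMinus_apply_left (h : i ≠ j) : sMinus p i j l x i = x j + l * p := by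
  simp only [sMinus, h, ↓reduceIte]; ring

@[simp] lemma sMinus_apply_right (h : i ≠ j) : sMinus p i j l x j = x i - l * p := by
  simp only [sMinus, h.symm, ↓reduceIte]; ring

lemma sMinus_apply_of_ne_of_ne (hi : k ≠ i) (hj : k ≠ j) : sMinus p i j l x k = x k := by
  simp [sMinus, hi, hj]

@[simp] lemma sPlus_apply_left (h : i ≠ j) : sPlus p i j l x i = -x j + l * p := by
  simp only [sPlus, h, ↓reduceIte]; ring

@[simp] lemma sPlus_apply_right (h : i ≠ j) : sPlus p i j l x j = -x i + l * p := by
  simp only [sPlus, h.symm, ↓reduceIte]; ring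

lemma sPlus_apply_of_ne_of_ne (hi : k ≠ i) (hj : k ≠ j) : sPlus p i j l x k = x k := by
  simp [sPlus, hi, hj]

@[simp] lemma sDouble_apply_self : sDouble p i l x i = -x i + 2 * l * p := by
  simp only [sDouble, ↓reduceIte]; ring

lemma sDouble_apply_of_ne (h : k ≠ i) : sDouble p i l x k = x k := by
  simp [sDouble, h]

lemma sum_sMinus : ∑ k, sMinus p i j l x k = ∑ k, x k := by
  simp [sMinus, sum_sub_distrib, ← mul_sum]

lemma sum_sPlus : ∑ k, sPlus p i j l x k = ∑ k, x k - 2 * (x i + x j - l * p) := by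
  simp only [sPlus, sum_sub_distrib, ← mul_sum, sum_add_distrib, sum_ite_eq', mem_univ, if_true]
  ring

lemma sum_sDouble : ∑ k, sDouble p i l x k = ∑ k, x k - 2 * (x i - l * p) := by
  simp [sDouble, sum_sub_distrib]

end Reflections

def signModSetoid (p : ℤ) : Setoid ℤ where
  r a b := a ≡ b [ZMOD p] ∨ a ≡ -b [ZMOD p]
  iseqv := by
    refine ⟨fun _ => Or.inl rfl, ?_, ?_⟩
    · rintro a b (h | h)
      · exact Or.inl h.symm
      · exact Or.inr (by simpa using h.neg.symm)
    · rintro a b c (h | h) (h' | h')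
      · exact Or.inl (h.trans h')
      · exact Or.inr (h.trans h')
      · exact Or.inr (h.trans h'.neg)
      · exact Or.inl (by simpa using h.trans h'.neg)

def signClass (p a : ℤ) : Quotient (signModSetoid p) := Quotient.mk _ a

section SignClass

variable {p : ℤ}

lemma signClass_eq_iff {a b : ℤ} :
    signClass p a = signClass p b ↔ a ≡ b [ZMOD p] ∨ a ≡ -b [ZMOD p] :=
  Quotient.eq

@[simp] lemma signClass_neg (a : ℤ) : signClass p (-a) = signClass p a :=
  signClass_eq_iff.2 (Or.inr (Int.ModEq.refl _))

@[simp] lemma signClass_add_mul_self (a l : ℤ) : signClass p (a + l * p) = signClass p a :=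
  signClass_eq_iff.2 (Or.inl (Int.add_mul_emod_self_right a l p))

@[simp] lemma signClass_sub_mul_self (a l : ℤ) : signClass p (a - l * p) = signClass p a := by
  rw [sub_eq_add_neg, ← neg_mul, signClass_add_mul_self]

end SignClass

lemma exists_natCast_le_signClass_eq {p : ℕ} (hp : Odd p) (a : ℤ) :
    ∃ r : ℕ, r ≤ (p - 1) / 2 ∧ signClass p a = signClass p r := by
  have hp2 := Nat.odd_iff.1 hp
  have h0 : 0 ≤ a % p := Int.emod_nonneg a (by omega)
  have h1 : a % p < p := Int.emod_lt_of_pos a (by omega)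
  by_cases hsmall : 2 * (a % p) < p
  · refine ⟨(a % p).toNat, by omega, signClass_eq_iff.2 (Or.inl ?_)⟩
    rw [Int.toNat_of_nonneg h0]
    exact (Int.emod_emod_of_dvd a dvd_rfl).symm
  · refine ⟨(p - a % p).toNat, by omega, signClass_eq_iff.2 (Or.inr ?_)⟩
    rw [Int.toNat_of_nonneg (by omega), neg_sub]
    exact Int.modEq_iff_dvd.2 ⟨-(a / p) - 1, by rw [Int.emod_def]; ring⟩

/-- The classes of `signModSetoid p` are the nodes of the arrow diagram, and
`signClassCount p s x c` is the number of arrows at the node `c`. -/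
noncomputable def signClassCount {m : ℕ} (p : ℤ) (s : ℕ) (x : Fin m → ℤ)
    (c : Quotient (signModSetoid p)) : ℕ :=
  Nat.card {k : Fin m // (k : ℕ) < s ∧ signClass p (x k) = c}

def preservingSubgroup {X β : Type*} (I : X → β) : Subgroup (Perm X) where
  carrier := {g | ∀ x, I (g x) = I x}
  one_mem' _ := rfl
  mul_mem' ha hb x := (ha _).trans (hb x)
  inv_mem' {g} hg x := by simpa using (hg (g⁻¹ x)).symm

section Invariants

variable {m : ℕ} {p : ℤ} {s : ℕ}

lemma signClassCount_eq_of_signClass_eq (τ : Perm (Fin m))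
    (hτ : ∀ k, (τ k : ℕ) < s ↔ (k : ℕ) < s) {x y : Fin m → ℤ}
    (h : ∀ k, signClass p (y k) = signClass p (x (τ k))) :
    signClassCount p s y = signClassCount p s x :=
  funext fun _ => Nat.card_congr (subtypeEquiv τ fun k => by rw [hτ, h])

lemma swap_apply_lt_iff {i j k : Fin m} (hi : (i : ℕ) < s) (hj : (j : ℕ) < s) :
    (swap i j k : ℕ) < s ↔ (k : ℕ) < s := by
  rcases eq_or_ne k i with rfl | hki
  · simp [hi, hj]
  rcases eq_or_ne k j with rfl | hkj
  · simp [hi, hj]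
  rw [swap_apply_of_ne_of_ne hki hkj]

lemma WpC_le_preservingSubgroup_sum_emod_two :
    WpC m p s ≤ preservingSubgroup fun x : Fin m → ℤ => (∑ k, x k) % 2 := by
  rw [WpC, Subgroup.closure_le]
  rintro g (⟨i, j, l, hij, -, rfl | rfl⟩ | ⟨i, l, -, rfl⟩) x
  · simp [sum_sMinus]
  · simp only [sPlusPerm_apply, sum_sPlus]
    omega
  · simp only [sDoublePerm_apply, sum_sDouble]
    omega

lemma WpC_le_preservingSubgroup_signClassCount :
    WpC m p s ≤ preservingSubgroup (signClassCount (m := m) p s) := by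
  rw [WpC, Subgroup.closure_le]
  rintro g (⟨i, j, l, hij, hj, hg⟩ | ⟨i, l, -, rfl⟩) x
  · have hi : (i : ℕ) < s := lt_trans hij hj
    refine signClassCount_eq_of_signClass_eq (swap i j) (fun _ => swap_apply_lt_iff hi hj)
      fun k => ?_
    rcases eq_or_ne k i with rfl | hki
    · rcases hg with rfl | rfl <;> simp [hij.ne]
    rcases eq_or_ne k j with rfl | hkj
    · rcases hg with rfl | rfl <;> simp [hij.ne]
    rcases hg with rfl | rfl <;>
      simp [sMinus_apply_of_ne_of_ne hki hkj, sPlus_apply_of_ne_of_ne hki hkj,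
        swap_apply_of_ne_of_ne hki hkj]
  · refine signClassCount_eq_of_signClass_eq 1 (fun _ => Iff.rfl) fun k => ?_
    rcases eq_or_ne k i with rfl | hki
    · simp
    simp [sDouble_apply_of_ne hki]

end Invariants

def translations {α : Type*} [AddGroup α] (W : Subgroup (Perm α)) : AddSubgroup α where
  carrier := {t | Equiv.addRight t ∈ W}
  zero_mem' := by simp
  add_mem' ha hb := by simpa using W.mul_mem hb ha
  neg_mem' ha := by simpa using W.inv_mem ha

lemma mem_translations {α : Type*} [AddGroup α] {W : Subgroup (Perm α)} {t : α} :
    t ∈ translations W ↔ Equiv.addRight t ∈ W :=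
  Iff.rfl

def negCoords {ι : Type*} [DecidableEq ι] (D : Finset ι) : Perm (ι → ℤ) :=
  Function.Involutive.toPerm (fun x k => if k ∈ D then -x k else x k) fun x => by
    funext k; by_cases hk : k ∈ D <;> simp [hk]

@[simp] lemma negCoords_apply {ι : Type*} [DecidableEq ι] (D : Finset ι) (x : ι → ℤ) (k : ι) :
    negCoords D x k = if k ∈ D then -x k else x k :=
  rfl

section Membership

variable {m : ℕ} {p : ℤ} {s : ℕ} {i j : Fin m}

lemma sMinusPerm_mem_WpC (hij : i < j) (hj : (j : ℕ) < s) (l : ℤ) :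
    sMinusPerm p i j hij.ne l ∈ WpC m p s :=
  Subgroup.subset_closure (Or.inl ⟨i, j, l, hij, hj, Or.inl rfl⟩)

lemma sDoublePerm_mem_WpC (hi : (i : ℕ) < s) (l : ℤ) : sDoublePerm p i l ∈ WpC m p s :=
  Subgroup.subset_closure (Or.inr ⟨i, l, hi, rfl⟩)

lemma single_two_mul_mem_translations_WpC (hi : (i : ℕ) < s) :
    Pi.single i (2 * p) ∈ translations (WpC m p s) := by
  have : Equiv.addRight (Pi.single i (2 * p)) = sDoublePerm p i 1 * sDoublePerm p i 0 := by
    ext x k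
    rcases eq_or_ne k i with rfl | hk
    · simp
    · simp [hk, sDouble_apply_of_ne hk]
  rw [mem_translations, this]
  exact mul_mem (sDoublePerm_mem_WpC hi 1) (sDoublePerm_mem_WpC hi 0)

lemma single_sub_single_mem_translations_WpC_of_lt (hij : i < j) (hj : (j : ℕ) < s) :
    Pi.single i p - Pi.single j p ∈ translations (WpC m p s) := by
  have : Equiv.addRight (Pi.single i p - Pi.single j p) =
      sMinusPerm p i j hij.ne 1 * sMinusPerm p i j hij.ne 0 := by
    ext x k
    rcases eq_or_ne k i with rfl | hki
    · simp [hij.ne]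
    rcases eq_or_ne k j with rfl | hkj
    · simp [hij.ne, hij.ne', sub_eq_add_neg]
    simp [hki, hkj, sMinus_apply_of_ne_of_ne hki hkj]
  rw [mem_translations, this]
  exact mul_mem (sMinusPerm_mem_WpC hij hj 1) (sMinusPerm_mem_WpC hij hj 0)

lemma single_sub_single_mem_translations_WpC (hi : (i : ℕ) < s) (hj : (j : ℕ) < s) :
    Pi.single i p - Pi.single j p ∈ translations (WpC m p s) := by
  rcases lt_trichotomy i j with hij | rfl | hji
  · exact single_sub_single_mem_translations_WpC_of_lt hij hj
  · simp
  · simpa using neg_mem (single_sub_single_mem_translations_WpC_of_lt hji hi)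

lemma smul_mem_translations_WpC {t : Fin m → ℤ} (ht : ∀ k : Fin m, s ≤ (k : ℕ) → t k = 0)
    (heven : Even (∑ k, t k)) : p • t ∈ translations (WpC m p s) := by
  by_cases hs : ∃ k₀ : Fin m, (k₀ : ℕ) < s
  · obtain ⟨k₀, hk₀⟩ := hs
    obtain ⟨h, hh⟩ := heven
    have hdecomp : p • t =
        ∑ k, t k • (Pi.single k p - Pi.single k₀ p) + h • Pi.single k₀ (2 * p) := by
      ext k
      simp only [Pi.smul_apply, zsmul_eq_mul, mul_sub, sum_sub_distrib,
        ← sum_mul, Pi.add_apply, Pi.sub_apply, Finset.sum_apply, Pi.mul_apply, Pi.intCast_apply,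
        Int.cast_eq, Pi.single_apply, mul_ite, mul_zero, sum_ite_eq, mem_univ, ↓reduceIte]
      rw [hh]
      split_ifs <;> ring
    rw [hdecomp]
    refine add_mem (sum_mem fun k _ => ?_)
      (zsmul_mem (single_two_mul_mem_translations_WpC hk₀) h)
    by_cases hk : (k : ℕ) < s
    · exact zsmul_mem (single_sub_single_mem_translations_WpC hk hk₀) _
    · simp [ht k (not_lt.1 hk)]
  · have : t = 0 := funext fun k => ht k (not_lt.1 fun hk => hs ⟨k, hk⟩)
    simp [this]

lemma arrowCongr_swap_mem_WpC {a b : Fin m} (hab : a ≠ b) (ha : (a : ℕ) < s)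
    (hb : (b : ℕ) < s) :
    (swap a b).arrowCongr (Equiv.refl ℤ) ∈ WpC m p s := by
  wlog hlt : a < b generalizing a b
  · simpa [swap_comm] using this hab.symm hb ha (lt_of_le_of_ne (not_lt.1 hlt) hab.symm)
  have : (swap a b).arrowCongr (Equiv.refl ℤ) = sMinusPerm p a b hab 0 := by
    ext x k
    rcases eq_or_ne k a with rfl | hka
    · simp [hab]
    rcases eq_or_ne k b with rfl | hkb
    · simp [hab]
    simp [swap_apply_of_ne_of_ne hka hkb, sMinus_apply_of_ne_of_ne hka hkb]
  rw [this]
  exact sMinusPerm_mem_WpC hlt hb 0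

lemma arrowCongr_ofSubtype_mem_WpC (σ : Perm {k : Fin m // (k : ℕ) < s}) :
    (Perm.ofSubtype σ).arrowCongr (Equiv.refl ℤ) ∈ WpC m p s := by
  induction σ using Perm.swap_induction_on with
  | one =>
    rw [map_one]
    convert (WpC m p s).one_mem
    ext
    rfl
  | swap_mul σ a b hab ih =>
    rw [map_mul, Perm.ofSubtype_swap_eq]
    exact mul_mem (arrowCongr_swap_mem_WpC (Subtype.coe_ne_coe.2 hab) a.2 b.2) ih

lemma negCoords_mem_WpC {D : Finset (Fin m)} (hD : ∀ k ∈ D, (k : ℕ) < s) :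
    negCoords D ∈ WpC m p s := by
  induction D using Finset.induction_on with
  | empty =>
    convert (WpC m p s).one_mem
    ext
    simp
  | insert i D hiD ih =>
    have : negCoords (insert i D) = sDoublePerm p i 0 * negCoords D := by
      ext x k
      rcases eq_or_ne k i with rfl | hk
      · simp [hiD]
      · simp [hk, sDouble_apply_of_ne hk]
    rw [this]
    exact mul_mem (sDoublePerm_mem_WpC (hD i (mem_insert_self i D)) 0)
      (ih fun k hk => hD k (mem_insert_of_mem hk))

end Membership

lemma exists_perm_apply_eq_of_card_fiber_eq {α β : Type*} [Finite α] {f g : α → β}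
    (h : ∀ b, Nat.card {a // f a = b} = Nat.card {a // g a = b}) :
    ∃ σ : Perm α, ∀ a, f (σ a) = g a :=
  ⟨ofFiberEquiv fun b =>
    (Finite.card_eq (α := {a // g a = b}) (β := {a // f a = b})).1 (h b).symm |>.some,
    ofFiberEquiv_map _⟩

section Conjugacy

variable {m : ℕ} {p : ℤ} {s : ℕ} {x y : Fin m → ℤ}

lemma exists_perm_signClass_eq (hcount : signClassCount p s x = signClassCount p s y) :
    ∃ σ : Perm {k : Fin m // (k : ℕ) < s}, ∀ k, signClass p (x (σ k)) = signClass p (y k) := by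
  refine exists_perm_apply_eq_of_card_fiber_eq
    (f := fun k : {k : Fin m // (k : ℕ) < s} => signClass p (x k))
    (g := fun k => signClass p (y k)) fun c => ?_
  have := congrFun hcount c
  rwa [signClassCount, signClassCount,
    ← Nat.card_congr (subtypeSubtypeEquivSubtypeInter (fun k : Fin m => (k : ℕ) < s) _),
    ← Nat.card_congr (subtypeSubtypeEquivSubtypeInter (fun k : Fin m => (k : ℕ) < s) _)] at this

lemma exists_mem_WpC_modEq (htail : ∀ k : Fin m, s ≤ (k : ℕ) → x k = y k)
    (hcount : signClassCount p s x = signClassCount p s y) :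
    ∃ h ∈ WpC m p s,
      (∀ k, h x k ≡ y k [ZMOD p]) ∧ ∀ k : Fin m, s ≤ (k : ℕ) → h x k = x k := by
  obtain ⟨σ, hσ⟩ := exists_perm_signClass_eq hcount
  set π := (Perm.ofSubtype σ⁻¹).arrowCongr (Equiv.refl ℤ)
  have hπ : ∀ k, π x k = x (Perm.ofSubtype σ k) := fun k => by
    simp [π, ← Perm.inv_def, ← map_inv]
  have hπtail : ∀ k : Fin m, s ≤ (k : ℕ) → π x k = x k := fun k hk => by
    rw [hπ, Perm.ofSubtype_apply_of_not_mem σ (not_lt.2 hk)]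
  have hπmod : ∀ k, π x k ≡ y k [ZMOD p] ∨ π x k ≡ -y k [ZMOD p] := fun k => by
    by_cases hk : (k : ℕ) < s
    · rw [hπ, Perm.ofSubtype_apply_of_mem σ hk]
      exact signClass_eq_iff.1 (hσ ⟨k, hk⟩)
    · rw [hπtail k (not_lt.1 hk), htail k (not_lt.1 hk)]
      exact Or.inl rfl
  set D := univ.filter fun k => ¬ π x k ≡ y k [ZMOD p]
  have hD : ∀ k ∈ D, (k : ℕ) < s := fun k hkD => by
    by_contra hk
    rw [mem_filter, hπtail k (not_lt.1 hk), htail k (not_lt.1 hk)] at hkD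
    exact hkD.2 rfl
  refine ⟨negCoords D * π, mul_mem (negCoords_mem_WpC hD) (arrowCongr_ofSubtype_mem_WpC _),
    fun k => ?_, fun k hk => ?_⟩
  · by_cases hkD : k ∈ D
    · simpa [hkD] using ((hπmod k).resolve_left (mem_filter.1 hkD).2).neg
    · rw [Equiv.Perm.mul_apply, negCoords_apply, if_neg hkD]
      simpa [D] using hkD
  · have hkD : k ∉ D := fun h => (hD k h).not_ge hk
    simp [hkD, hπtail k hk]

lemma exists_smul_mem_translations_WpC_add_eq (hp : Odd p) {z : Fin m → ℤ}
    (hmod : ∀ k, z k ≡ y k [ZMOD p]) (htail : ∀ k : Fin m, s ≤ (k : ℕ) → z k = y k)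
    (hpar : (∑ k, z k) % 2 = (∑ k, y k) % 2) :
    ∃ t, p • t ∈ translations (WpC m p s) ∧ z + p • t = y := by
  choose t ht using fun k => (hmod k).dvd
  have hp0 : p ≠ 0 := by rintro rfl; simp at hp
  refine ⟨t, smul_mem_translations_WpC (fun k hk => ?_) ?_, funext fun k => ?_⟩
  · have htk := ht k
    rw [htail k hk, sub_self, eq_comm, mul_eq_zero] at htk
    exact htk.resolve_left hp0
  · have hsum : ∑ k, y k - ∑ k, z k = p * ∑ k, t k := by
      rw [← sum_sub_distrib, mul_sum]
      exact sum_congr rfl fun k _ => ht k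
    have heven : Even (p * ∑ k, t k) := Int.even_iff.2 (by omega)
    exact (Int.even_mul.1 heven).resolve_left (Int.not_even_iff_odd.2 hp)
  · simp [← ht k]

lemma exists_mem_WpC_apply_eq (hp : Odd p) (htail : ∀ k : Fin m, s ≤ (k : ℕ) → x k = y k)
    (hpar : (∑ k, x k) % 2 = (∑ k, y k) % 2)
    (hcount : signClassCount p s x = signClassCount p s y) :
    ∃ g ∈ WpC m p s, g x = y := by
  obtain ⟨h, hW, hmod, hfix⟩ := exists_mem_WpC_modEq htail hcount
  obtain ⟨t, ht, rfl⟩ := exists_smul_mem_translations_WpC_add_eq hp hmod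
    (fun k hk => (hfix k hk).trans (htail k hk))
    ((WpC_le_preservingSubgroup_sum_emod_two hW x).trans hpar)
  exact ⟨Equiv.addRight (p • t) * h, mul_mem ht hW, rfl⟩

theorem exists_mem_WpC_apply_eq_iff (hp : Odd p)
    (htail : ∀ k : Fin m, s ≤ (k : ℕ) → x k = y k) :
    (∃ g ∈ WpC m p s, g x = y) ↔
      (∑ k, x k) % 2 = (∑ k, y k) % 2 ∧ signClassCount p s x = signClassCount p s y := by
  refine ⟨?_, fun ⟨hpar, hcount⟩ => exists_mem_WpC_apply_eq hp htail hpar hcount⟩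
  rintro ⟨g, hg, rfl⟩
  exact ⟨(WpC_le_preservingSubgroup_sum_emod_two hg x).symm,
    (WpC_le_preservingSubgroup_signClassCount hg x).symm⟩

end Conjugacy

lemma signClassCount_eq_iff {m p s : ℕ} (hp : Odd p) {x y : Fin m → ℤ} :
    signClassCount p s x = signClassCount p s y ↔
      ∀ r : ℕ, r ≤ (p - 1) / 2 →
        Nat.card {i : Fin m // (i : ℕ) < s ∧ (x i ≡ r [ZMOD p] ∨ x i ≡ -r [ZMOD p])} =
        Nat.card {i : Fin m // (i : ℕ) < s ∧ (y i ≡ r [ZMOD p] ∨ y i ≡ -r [ZMOD p])} := by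
  simp only [← signClass_eq_iff]
  refine ⟨fun h r _ => congrFun h _, fun h => funext fun c => ?_⟩
  induction c using Quotient.inductionOn with
  | h a =>
    obtain ⟨r, hr, ha⟩ := exists_natCast_le_signClass_eq hp a
    exact (congrArg (signClassCount p s x) ha).trans
      ((h r hr).trans (congrArg (signClassCount p s y) ha).symm)

lemma IsPartitionVec.eq_zero_of_plen_le {m s : ℕ} {lam : Fin m → ℤ} (h : IsPartitionVec lam)
    (hl : plen lam ≤ s) {i : Fin m} (hi : s ≤ (i : ℕ)) : lam i = 0 := by
  by_contra hne
  have hsub : Iic i ⊆ univ.filter fun j => lam j ≠ 0 := fun j hj => by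
    simp only [mem_filter, mem_univ, true_and]
    exact fun h0 => hne (le_antisymm (h0 ▸ h.1 j i (mem_Iic.1 hj)) (h.2 i))
  have := card_le_card hsub
  rw [Fin.card_Iic] at this
  unfold plen at hl
  omega

theorem statement11_general (m p : ℕ) (hodd : Odd p) (s : ℕ)
    (mu nu : Fin m → ℤ) (hmu : IsPartitionVec mu) (hnu : IsPartitionVec nu)
    (hlmu : plen mu ≤ s) (hlnu : plen nu ≤ s) :
    DotConj (WpC m (p : ℤ) s) mu nu ↔
      (Even ((∑ i, mu i) - (∑ i, nu i)) ∧
        ∀ r : ℕ, r ≤ (p - 1) / 2 →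
          Nat.card {i : Fin m // (i : ℕ) < s ∧
            (Int.ModEq (p : ℤ) (mu i + rho i) (r : ℤ) ∨
              Int.ModEq (p : ℤ) (mu i + rho i) (-(r : ℤ)))} =
          Nat.card {i : Fin m // (i : ℕ) < s ∧
            (Int.ModEq (p : ℤ) (nu i + rho i) (r : ℤ) ∨
              Int.ModEq (p : ℤ) (nu i + rho i) (-(r : ℤ)))}) := by
  have htail : ∀ k : Fin m, s ≤ (k : ℕ) → mu k + rho k = nu k + rho k := fun k hk => by
    rw [hmu.eq_zero_of_plen_le hlmu hk, hnu.eq_zero_of_plen_le hlnu hk]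
  have hpar : (∑ k, (mu k + rho k)) % 2 = (∑ k, (nu k + rho k)) % 2 ↔
      Even ((∑ i, mu i) - ∑ i, nu i) := by
    rw [sum_add_distrib, sum_add_distrib, Int.even_iff]
    omega
  rw [DotConj, exists_mem_WpC_apply_eq_iff hodd.natCast htail, hpar, signClassCount_eq_iff hodd]

theorem statement11 (m p : ℕ) (hp : p.Prime) (hodd : Odd p)
    (s : ℕ) (hs1 : 1 ≤ s) (hsm : s ≤ m)
    (mu nu : Fin m → ℤ) (hmu : IsPartitionVec mu) (hnu : IsPartitionVec nu)
    (hlmu : plen mu ≤ s) (hlnu : plen nu ≤ s) :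
    DotConj (WpC m (p : ℤ) s) mu nu ↔
      (Even ((∑ i, mu i) - (∑ i, nu i)) ∧
        ∀ r : ℕ, r ≤ (p - 1) / 2 →
          Nat.card {i : Fin m // (i : ℕ) < s ∧
            (Int.ModEq (p : ℤ) (mu i + rho i) (r : ℤ) ∨
              Int.ModEq (p : ℤ) (mu i + rho i) (-(r : ℤ)))} =
          Nat.card {i : Fin m // (i : ℕ) < s ∧
            (Int.ModEq (p : ℤ) (nu i + rho i) (r : ℤ) ∨
              Int.ModEq (p : ℤ) (nu i + rho i) (-(r : ℤ)))}) :=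
  statement11_general m p hodd s mu nu hmu hnu hlmu hlnu
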